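/- Let f : [0, ∞) → ℝ be differentiable, strictly decreasing and convex, and suppose b₁, b₂ > 0 satisfy f'(b₁) = 2 f'(b₂) and b₁ + b₂ = Δ with b₂ < Δ. Then f(Δ) − f(b₂) + (1/2)(f(0) − f(b₁)) > 0; i.e., splitting the increment Δ into b₂ now and b₁ later strictly reduces the weighted error (1/2^{J+1})·[first term] + (1/2^{J+2})·[second term]. -/
import Mathlib

open Real Set

/-- Splitting the last increment strictly reduces the weighted error:
if `f` is differentiable, strictly decreasing and strictly convex on `[0,∞)`,
`b₁, b₂ > 0` with `f'(b₁) = 2 f'(b₂)`, `b₁ + b₂ = Δ` and `b₂ < Δ`, then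
`f(Δ) − f(b₂) + (1/2)(f(0) − f(b₁)) > 0`. -/
theorem split_increment_improves
    (f : ℝ → ℝ) (hdiff : Differentiable ℝ f)
    (hanti : StrictAnti f) (hconv : StrictConvexOn ℝ (Ici 0) f)
    (b₁ b₂ Δ : ℝ) (hb₁ : 0 < b₁) (hb₂ : 0 < b₂)
    (hderiv : deriv f b₁ = 2 * deriv f b₂)
    (hsum : b₁ + b₂ = Δ) (hlt : b₂ < Δ) :
    0 < f Δ - f b₂ + (1 / 2) * (f 0 - f b₁) := by
  have hΔ : (0:ℝ) < Δ := hb₂.trans hlt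
  have h1 : deriv f b₂ < slope f b₂ Δ :=
    hconv.deriv_lt_slope hb₂.le hΔ.le hlt (hdiff b₂)
  have h2 : slope f 0 b₁ < deriv f b₁ :=
    hconv.slope_lt_deriv (mem_Ici.2 le_rfl) hb₁.le hb₁ (hdiff b₁)
  have hΔb₂ : Δ - b₂ = b₁ := by linarith
  rw [slope_def_field, lt_div_iff₀ (by linarith : (0:ℝ) < Δ - b₂)] at h1
  rw [slope_def_field, div_lt_iff₀ (by simpa using hb₁)] at h2
  rw [hΔb₂] at h1
  rw [hderiv] at h2
  nlinarith [h1, h2]
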